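/- Let (G,M,I) be a finite context with ∅'' = ∅, let z ∈ G and H = G ∖ {z}, let π□ be the finest extent partition of (G,M,I), let z^□□ be the class of π□ containing z, and assume z^□□ ≠ {z}. If T_G is a maximal classification tree in the box extent lattice B(G,M,I), then there exists a maximal classification tree M in the box extent lattice B(H, M, I ∩ (H×M)) of the subcontext such that T_G = M*, where M* = {E ∈ M : E is a box extent of (G,M,I)} ∪ {E ∪ {z} : E ∈ M, E ∪ {z} is a box extent of (G,M,I)}. -/

import Mathlib

open Set

variable {G M : Type*}

/-- The attribute-derivation `A'` of a set of objects (the restricted relation of a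
subcontext agrees with `I` on its object set, so no restriction is needed here). -/
def polarUp (I : G → M → Prop) (A : Set G) : Set M := {m | ∀ g ∈ A, I g m}

/-- The object-derivation `B'` of a set of attributes, computed in the subcontext whose
object set is `H` (relation `I ∩ H×M`). -/
def polarDown (I : G → M → Prop) (H : Set G) (B : Set M) : Set G :=
  {g | g ∈ H ∧ ∀ m ∈ B, I g m}

/-- The closure `A''` computed in the subcontext with object set `H`.
Taking `H = Set.univ` gives the closure in the full context `(G,M,I)`. -/
def cl2 (I : G → M → Prop) (H A : Set G) : Set G := polarDown I H (polarUp I A)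

/-- `A` is an extent of the subcontext with object set `H`. -/
def IsExtent (I : G → M → Prop) (H A : Set G) : Prop := A ⊆ H ∧ cl2 I H A = A

/-- An extent partition of the subcontext with object set `H`: a partition of `H`
all of whose classes are extents. -/
def IsExtentPartition (I : G → M → Prop) (H : Set G) (π : Set (Set G)) : Prop :=
  (∀ A ∈ π, A.Nonempty) ∧ π.Pairwise Disjoint ∧ ⋃₀ π = H ∧ ∀ A ∈ π, IsExtent I H A

/-- `E` is a box extent of the subcontext with object set `H`: a class of some extent
partition, or `∅''`. -/
def IsBoxExtent (I : G → M → Prop) (H E : Set G) : Prop :=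
  (∃ π : Set (Set G), IsExtentPartition I H π ∧ E ∈ π) ∨ E = cl2 I H ∅

/-- The finest extent partition: every class of every extent partition is a union of
its classes. -/
def IsFinestExtentPartition (I : G → M → Prop) (H : Set G) (π : Set (Set G)) : Prop :=
  IsExtentPartition I H π ∧
    ∀ σ : Set (Set G), IsExtentPartition I H σ → ∀ A ∈ σ, ∃ S ⊆ π, A = ⋃₀ S

/-- A classification tree in the box extent lattice of the subcontext with object set
`H`: a set of nonempty box extents such that for every nonempty box extent `X`,
`{E ∈ T | X ⊆ E}` is a nonempty chain under inclusion. -/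
def IsBoxClassTree (I : G → M → Prop) (H : Set G) (T : Set (Set G)) : Prop :=
  (∀ E ∈ T, E.Nonempty ∧ IsBoxExtent I H E) ∧
  ∀ X : Set G, X.Nonempty → IsBoxExtent I H X →
    ({E ∈ T | X ⊆ E}.Nonempty ∧ IsChain (· ⊆ ·) {E ∈ T | X ⊆ E})

/-- A maximal classification tree in the box extent lattice. -/
def IsMaxBoxClassTree (I : G → M → Prop) (H : Set G) (T : Set (Set G)) : Prop :=
  IsBoxClassTree I H T ∧ ∀ T' : Set (Set G), IsBoxClassTree I H T' → T ⊆ T' → T' = T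

/-- Given a classification tree `T` of the subcontext `(G ∖ {z}, M, I ∩ (G∖{z})×M)`,
`treeStar I z T = T⁽¹⁾ ∪ {E ∪ {z} | E ∈ T⁽²⁾}`, where `T⁽¹⁾` consists of the members of
`T` that are box extents of `(G,M,I)` and `T⁽²⁾` of those `E ∈ T` with `E ∪ {z}` a box
extent of `(G,M,I)`. -/
def treeStar (I : G → M → Prop) (z : G) (T : Set (Set G)) : Set (Set G) :=
  {E ∈ T | IsBoxExtent I Set.univ E} ∪
    (fun E => E ∪ {z}) '' {E ∈ T | IsBoxExtent I Set.univ (E ∪ {z})}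

/-! Deleting `z` is injective and order-reflecting on box extents of `(G,M,I)`, because
box extents are unions of classes of `π□` and `z` shares its class with some `y ≠ z`. Hence
`T_G` maps to a classification tree of the subcontext, which extends to a maximal one `M`.
Conversely, if `Y` is a box extent with `Y ∖ {z} ∈ M`, then adding `Y` to `T_G` still gives
a classification tree (chains in `T_G ∪ {Y}` are pulled back from chains in `M`), so
`Y ∈ T_G` by maximality; this yields `T_G = M*`. -/

theorem isChain_of_mapsTo {α β : Type*} {s : Set α} {c : Set β} {r : α → α → Prop}
    {r' : β → β → Prop} [Std.Refl r'] (f : α → β) (hc : IsChain r' c) (hf : MapsTo f s c)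
    (hr : ∀ a ∈ s, ∀ b ∈ s, r' (f a) (f b) → r a b) : IsChain r s := by
  intro a ha b hb _
  by_cases hab : f a = f b
  · exact Or.inl (hr a ha b hb (hab ▸ refl _))
  · exact (hc (hf ha) (hf hb) hab).imp (hr a ha b hb) (hr b hb a ha)

variable {I : G → M → Prop} {H K : Set G}

theorem subset_cl2 {A : Set G} (hA : A ⊆ H) : A ⊆ cl2 I H A :=
  fun g hg => ⟨hA hg, fun _ hm => hm g hg⟩

theorem cl2_mono {A B : Set G} (hAB : A ⊆ B) : cl2 I H A ⊆ cl2 I H B :=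
  fun _ hg => ⟨hg.1, fun m hm => hg.2 m fun x hx => hm x (hAB hx)⟩

theorem cl2_diff (A : Set G) : cl2 I (H \ K) A = cl2 I H A \ K := by
  ext g
  simp only [cl2, polarDown, mem_ofPred_eq, mem_sdiff]
  tauto

theorem IsExtent.diff {A : Set G} (hA : IsExtent I H A) (K : Set G) :
    IsExtent I (H \ K) (A \ K) := by
  refine ⟨sdiff_subset_sdiff_left hA.1, subset_antisymm ?_ (subset_cl2 (sdiff_subset_sdiff_left hA.1))⟩
  rw [cl2_diff]
  exact sdiff_subset_sdiff_left ((cl2_mono sdiff_subset).trans hA.2.le)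

theorem IsExtentPartition.image_diff {σ : Set (Set G)} (hσ : IsExtentPartition I H σ)
    (hne : ∀ B ∈ σ, (B \ K).Nonempty) : IsExtentPartition I (H \ K) ((· \ K) '' σ) := by
  refine ⟨forall_mem_image.2 hne, ?_, ?_, forall_mem_image.2 fun B hB => (hσ.2.2.2 B hB).diff K⟩
  · rintro _ ⟨B₁, hB₁, rfl⟩ _ ⟨B₂, hB₂, rfl⟩ hne
    exact (hσ.2.1 hB₁ hB₂ fun h => hne (h ▸ rfl)).mono sdiff_subset sdiff_subset
  · rw [sUnion_image, ← hσ.2.2.1, sUnion_eq_biUnion, iUnion_sdiff]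
    simp_rw [iUnion_sdiff]

theorem IsBoxExtent.subset {E : Set G} (hE : IsBoxExtent I H E) : E ⊆ H := by
  rcases hE with ⟨σ, hσ, hEσ⟩ | rfl
  exacts [(hσ.2.2.2 E hEσ).1, fun _ hg => hg.1]

theorem isBoxExtent_self (hH : H.Nonempty) : IsBoxExtent I H H :=
  Or.inl ⟨{H}, ⟨by simpa, pairwise_singleton _ _, sUnion_singleton _,
    by simpa [IsExtent] using subset_antisymm (fun _ hg => hg.1) (subset_cl2 subset_rfl)⟩, rfl⟩

theorem IsFinestExtentPartition.subset_of_mem {π : Set (Set G)}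
    (hπ : IsFinestExtentPartition I H π) (hempty : cl2 I H ∅ = ∅) {A E : Set G} {x : G}
    (hE : IsBoxExtent I H E) (hA : A ∈ π) (hxA : x ∈ A) (hxE : x ∈ E) : A ⊆ E := by
  rcases hE with ⟨σ, hσ, hEσ⟩ | rfl
  · obtain ⟨S, hSπ, rfl⟩ := hπ.2 σ hσ E hEσ
    obtain ⟨B, hBS, hxB⟩ := hxE
    rw [hπ.1.2.1.eq hA (hSπ hBS) (not_disjoint_iff.2 ⟨x, hxA, hxB⟩)]
    exact subset_sUnion_of_mem hBS
  · exact absurd (hempty ▸ hxE) (notMem_empty x)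

theorem IsFinestExtentPartition.mem_iff_of_mem {π : Set (Set G)}
    (hπ : IsFinestExtentPartition I H π) (hempty : cl2 I H ∅ = ∅) {A E : Set G} {x y : G}
    (hE : IsBoxExtent I H E) (hA : A ∈ π) (hxA : x ∈ A) (hyA : y ∈ A) : x ∈ E ↔ y ∈ E :=
  ⟨fun hxE => hπ.subset_of_mem hempty hE hA hxA hxE hyA,
    fun hyE => hπ.subset_of_mem hempty hE hA hyA hyE hxA⟩

theorem IsBoxClassTree.self_mem {T : Set (Set G)} (hT : IsBoxClassTree I H T)
    (hH : H.Nonempty) : H ∈ T := by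
  obtain ⟨E, hET, hHE⟩ := (hT.2 H hH (isBoxExtent_self hH)).1
  rwa [subset_antisymm (hT.1 E hET).2.subset hHE] at hET

theorem isBoxClassTree_sUnion {c : Set (Set (Set G))} (hc : IsChain (· ⊆ ·) c)
    (hcne : c.Nonempty) (htree : ∀ T ∈ c, IsBoxClassTree I H T) :
    IsBoxClassTree I H (⋃₀ c) := by
  refine ⟨fun E ⟨T, hTc, hET⟩ => (htree T hTc).1 E hET, fun X hXne hX => ⟨?_, ?_⟩⟩
  · obtain ⟨T, hTc⟩ := hcne
    obtain ⟨E, hET, hXE⟩ := ((htree T hTc).2 X hXne hX).1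
    exact ⟨E, ⟨T, hTc, hET⟩, hXE⟩
  · rintro E₁ ⟨⟨T₁, hT₁, hE₁⟩, hXE₁⟩ E₂ ⟨⟨T₂, hT₂, hE₂⟩, hXE₂⟩
    obtain ⟨T, hTc, hE₁T, hE₂T⟩ : ∃ T ∈ c, E₁ ∈ T ∧ E₂ ∈ T := by
      rcases hc.total hT₁ hT₂ with h | h
      exacts [⟨T₂, hT₂, h hE₁, hE₂⟩, ⟨T₁, hT₁, hE₁, h hE₂⟩]
    exact ((htree T hTc).2 X hXne hX).2 ⟨hE₁T, hXE₁⟩ ⟨hE₂T, hXE₂⟩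

theorem IsBoxClassTree.exists_isMaxBoxClassTree_superset {T : Set (Set G)}
    (hT : IsBoxClassTree I H T) : ∃ T', T ⊆ T' ∧ IsMaxBoxClassTree I H T' := by
  obtain ⟨T', hTT', hmax⟩ := zorn_subset_nonempty {T | IsBoxClassTree I H T}
    (fun c hc hchain hcne => ⟨⋃₀ c, isBoxClassTree_sUnion hchain hcne hc,
      fun _ => subset_sUnion_of_mem⟩) T hT
  exact ⟨T', hTT', hmax.1, fun T'' hT'' hsub => subset_antisymm (hmax.2 hT'' hsub) hsub⟩

theorem mem_treeStar_iff {z : G} {T : Set (Set G)} (hT : ∀ E ∈ T, z ∉ E) {F : Set G} :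
    F ∈ treeStar I z T ↔ IsBoxExtent I univ F ∧ F \ {z} ∈ T := by
  constructor
  · rintro (⟨hFT, hF⟩ | ⟨E, ⟨hET, hE⟩, rfl⟩)
    · exact ⟨hF, by rwa [sdiff_singleton_eq_self (hT F hFT)]⟩
    · exact ⟨hE, by rwa [union_sdiff_right, sdiff_singleton_eq_self (hT E hET)]⟩
  · rintro ⟨hF, hFT⟩
    by_cases hzF : z ∈ F
    · have hF' : F \ {z} ∪ {z} = F := by
        rw [sdiff_union_self, union_singleton, insert_eq_of_mem hzF]
      exact Or.inr ⟨F \ {z}, ⟨hFT, hF'.symm ▸ hF⟩, hF'⟩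
    · exact Or.inl ⟨by rwa [sdiff_singleton_eq_self hzF] at hFT, hF⟩

section DeleteObject

variable {y z : G}

theorem IsBoxExtent.sdiff_singleton_nonempty (hyz : y ≠ z)
    (htwin : ∀ F, IsBoxExtent I univ F → (y ∈ F ↔ z ∈ F)) {F : Set G}
    (hF : IsBoxExtent I univ F) (hFne : F.Nonempty) : (F \ {z}).Nonempty := by
  by_cases hzF : z ∈ F
  · exact ⟨y, (htwin F hF).2 hzF, hyz⟩
  · obtain ⟨x, hx⟩ := hFne
    exact ⟨x, hx, fun hxz => hzF (eq_of_mem_singleton hxz ▸ hx)⟩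

theorem IsBoxExtent.sdiff_singleton (hempty : cl2 I univ ∅ = ∅) (hyz : y ≠ z)
    (htwin : ∀ F, IsBoxExtent I univ F → (y ∈ F ↔ z ∈ F)) {F : Set G}
    (hF : IsBoxExtent I univ F) (hFne : F.Nonempty) :
    IsBoxExtent I (univ \ {z}) (F \ {z}) := by
  rcases hF with ⟨σ, hσ, hFσ⟩ | rfl
  · refine Or.inl ⟨_, hσ.image_diff fun B hB => ?_, mem_image_of_mem _ hFσ⟩
    exact sdiff_singleton_nonempty hyz htwin (Or.inl ⟨σ, hσ, hB⟩) (hσ.1 B hB)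
  · exact absurd hempty hFne.ne_empty

theorem subset_of_sdiff_singleton_subset (hyz : y ≠ z)
    (htwin : ∀ F, IsBoxExtent I univ F → (y ∈ F ↔ z ∈ F)) {F₁ F₂ : Set G}
    (hF₁ : IsBoxExtent I univ F₁) (hF₂ : IsBoxExtent I univ F₂)
    (h : F₁ \ {z} ⊆ F₂ \ {z}) : F₁ ⊆ F₂ := by
  intro x hx
  by_cases hxz : x = z
  · rw [hxz] at hx ⊢
    exact (htwin F₂ hF₂).1 (h ⟨(htwin F₁ hF₁).2 hx, hyz⟩).1
  · exact (h ⟨hx, hxz⟩).1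

theorem IsBoxClassTree.image_sdiff_singleton (hempty : cl2 I univ ∅ = ∅)
    {π : Set (Set G)} (hπ : IsFinestExtentPartition I univ π) (hyz : y ≠ z)
    (htwin : ∀ F, IsBoxExtent I univ F → (y ∈ F ↔ z ∈ F)) {T : Set (Set G)}
    (hT : IsBoxClassTree I univ T) : IsBoxClassTree I (univ \ {z}) ((· \ {z}) '' T) := by
  refine ⟨forall_mem_image.2 fun F hF => ?_, fun X hXne hX => ⟨?_, ?_⟩⟩
  · obtain ⟨hFne, hF⟩ := hT.1 F hF
    exact ⟨hF.sdiff_singleton_nonempty hyz htwin hFne, hF.sdiff_singleton hempty hyz htwin hFne⟩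
  · exact ⟨univ \ {z}, mem_image_of_mem _ (hT.self_mem ⟨z, trivial⟩), hX.subset⟩
  · obtain ⟨x, hx⟩ := hXne
    obtain ⟨A, hAπ, hxA⟩ : x ∈ ⋃₀ π := hπ.1.2.2.1 ▸ mem_univ x
    have hA := (hT.2 A (hπ.1.1 A hAπ) (Or.inl ⟨π, hπ.1, hAπ⟩)).2
    refine (hA.image_of_map_rel _ _ (· \ {z}) fun _ _ => sdiff_subset_sdiff_left).mono ?_
    rintro _ ⟨⟨F, hFT, rfl⟩, hXF⟩
    exact ⟨F, ⟨hFT, hπ.subset_of_mem hempty (hT.1 F hFT).2 hAπ hxA (hXF hx).1⟩, rfl⟩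

theorem IsMaxBoxClassTree.mem_of_sdiff_singleton_mem (hempty : cl2 I univ ∅ = ∅)
    (hyz : y ≠ z) (htwin : ∀ F, IsBoxExtent I univ F → (y ∈ F ↔ z ∈ F))
    {TG Mx : Set (Set G)} (hTG : IsMaxBoxClassTree I univ TG)
    (hMx : IsBoxClassTree I (univ \ {z}) Mx) (hTGMx : ∀ F ∈ TG, F \ {z} ∈ Mx) {Y : Set G}
    (hY : IsBoxExtent I univ Y) (hYMx : Y \ {z} ∈ Mx) : Y ∈ TG := by
  have hbox : ∀ F ∈ insert Y TG, IsBoxExtent I univ F :=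
    forall_mem_insert.2 ⟨hY, fun F hF => (hTG.1.1 F hF).2⟩
  have hMx' : ∀ F ∈ insert Y TG, F \ {z} ∈ Mx := forall_mem_insert.2 ⟨hYMx, hTGMx⟩
  have htree : IsBoxClassTree I univ (insert Y TG) := by
    refine ⟨forall_mem_insert.2 ⟨⟨(hMx.1 _ hYMx).1.mono sdiff_subset, hY⟩, hTG.1.1⟩,
      fun X hXne hX => ⟨?_, ?_⟩⟩
    · obtain ⟨E, hE, hXE⟩ := (hTG.1.2 X hXne hX).1
      exact ⟨E, mem_insert_of_mem _ hE, hXE⟩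
    · refine isChain_of_mapsTo (· \ {z}) (hMx.2 _ (hX.sdiff_singleton_nonempty hyz htwin hXne)
        (hX.sdiff_singleton hempty hyz htwin hXne)).2 ?_ ?_
      · rintro F ⟨hF, hXF⟩
        exact ⟨hMx' F hF, sdiff_subset_sdiff_left hXF⟩
      · rintro F₁ ⟨hF₁, -⟩ F₂ ⟨hF₂, -⟩
        exact subset_of_sdiff_singleton_subset hyz htwin (hbox F₁ hF₁) (hbox F₂ hF₂)
  exact hTG.2 _ htree (subset_insert Y TG) ▸ mem_insert Y TG

end DeleteObject

theorem maxBoxClassTree_eq_treeStar_of_maxSubcontextTree_general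
    (I : G → M → Prop)
    (hempty : cl2 I Set.univ (∅ : Set G) = ∅)
    (z : G) (π : Set (Set G)) (hπ : IsFinestExtentPartition I Set.univ π)
    (Z : Set G) (hZ : Z ∈ π) (hzZ : z ∈ Z) (hZne : Z ≠ {z})
    (TG : Set (Set G)) (hTG : IsMaxBoxClassTree I Set.univ TG) :
    ∃ Mx : Set (Set G), IsMaxBoxClassTree I (Set.univ \ {z}) Mx ∧
      TG = treeStar I z Mx := by
  obtain ⟨y, hyZ, hyz⟩ : ∃ y ∈ Z, y ≠ z := by
    by_contra! h
    exact hZne (eq_singleton_iff_unique_mem.2 ⟨hzZ, h⟩)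
  have htwin : ∀ F, IsBoxExtent I univ F → (y ∈ F ↔ z ∈ F) :=
    fun F hF => hπ.mem_iff_of_mem hempty hF hZ hyZ hzZ
  obtain ⟨Mx, hTGMx, hMx⟩ :=
    (hTG.1.image_sdiff_singleton hempty hπ hyz htwin).exists_isMaxBoxClassTree_superset
  have hTGMx' : ∀ F ∈ TG, F \ {z} ∈ Mx := fun F hF => hTGMx (mem_image_of_mem _ hF)
  have hzMx : ∀ E ∈ Mx, z ∉ E := fun E hE hzE => ((hMx.1.1 E hE).2.subset hzE).2 rfl
  refine ⟨Mx, hMx, Set.ext fun F => ?_⟩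
  rw [mem_treeStar_iff hzMx]
  exact ⟨fun hF => ⟨(hTG.1.1 F hF).2, hTGMx' F hF⟩, fun ⟨hF, hFMx⟩ =>
    hTG.mem_of_sdiff_singleton_mem hempty hyz htwin hMx.1 hTGMx' hF hFMx⟩

/-- Every maximal classification tree `T_G` in `B(G,M,I)` arises as `M*` for some
maximal classification tree `M` in the box extent lattice of the subcontext
`(G ∖ {z}, M, I ∩ (G∖{z})×M)` (assuming `z^□□ ≠ {z}`). -/
theorem maxBoxClassTree_eq_treeStar_of_maxSubcontextTree
    [Fintype G] [Fintype M] (I : G → M → Prop)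
    (hempty : cl2 I Set.univ (∅ : Set G) = ∅)
    (z : G) (π : Set (Set G)) (hπ : IsFinestExtentPartition I Set.univ π)
    (Z : Set G) (hZ : Z ∈ π) (hzZ : z ∈ Z) (hZne : Z ≠ {z})
    (TG : Set (Set G)) (hTG : IsMaxBoxClassTree I Set.univ TG) :
    ∃ Mx : Set (Set G), IsMaxBoxClassTree I (Set.univ \ {z}) Mx ∧
      TG = treeStar I z Mx :=
  maxBoxClassTree_eq_treeStar_of_maxSubcontextTree_general I hempty z π hπ Z hZ hzZ hZne TG hTG
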